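/- Let n ≥ 2 and let r_1,…,r_n be generators of 𝕊. Then every p ∈ 𝕊 can be written in the form p = ∑_{j=1}^n S_j·r_j where each S_j ∈ ℂ[X] is a scalar polynomial; that is, 𝕊 = M(r_1) + M(r_2) + ⋯ + M(r_n). -/

import Mathlib

open Polynomial

/-- The height of an `n`-dimensional vector polynomial `p = (P_1, ..., P_n)`:
`h(p) = max (n * deg P_j + j - 1)` over `1 <= j <= n`, taken in `Z union {-infty}`,
with `deg 0 = -infty` and `h(0) = -infty`.  (Entries are indexed by `j : Fin n`,
so `j.val` plays the role of `j - 1`.) -/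
noncomputable def height (n : ℕ) (p : Fin n → ℂ[X]) : WithBot ℤ :=
  Finset.univ.sup fun j => if p j = 0 then (⊥ : WithBot ℤ)
    else (((n * (p j).natDegree + j.val : ℕ) : ℤ) : WithBot ℤ)

/-- The solution set `S` of the interpolation problem: all vector polynomials
`p` such that the linear combination of the entries evaluated at the node `z j`
with coefficients `α j` vanishes, for every node `j`. -/
def Sol (n N : ℕ) (z : Fin N → ℂ) (α : Fin N → Fin n → ℂ) : Set (Fin n → ℂ[X]) :=
  {p | ∀ j : Fin N, ∑ k : Fin n, α j k * (p k).eval (z j) = 0}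

/-- `M(r_1) + ... + M(r_m)`: the set of sums of scalar-polynomial multiples of
the vector polynomials `r_1, ..., r_m`. -/
def Msum (n m : ℕ) (r : Fin m → (Fin n → ℂ[X])) : Set (Fin n → ℂ[X]) :=
  {q | ∃ S : Fin m → ℂ[X], q = ∑ j, S j • r j}

/-- `M(r_1) + ... + M(r_(j-1))`: the set of combinations of scalar-polynomial
multiples of the `r_l` with `l < j` (for `j = 0` this set is `{0}`). -/
def prevSet (n : ℕ) (r : Fin n → (Fin n → ℂ[X])) (j : Fin n) : Set (Fin n → ℂ[X]) :=
  {q | ∃ S : Fin n → ℂ[X], q = ∑ l ∈ Finset.univ.filter (fun l => l < j), S l • r l}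

/-- `r_1, ..., r_n` are generators of the solution set `S`: each `r_j` belongs
to `S \ (M(r_1) + ... + M(r_(j-1)))` and has minimal height among the elements
of that set.  (For `j = 1` this says that `r_1` is a nonzero element of `S` of
minimal height.) -/
def IsGenerators (n N : ℕ) (z : Fin N → ℂ) (α : Fin N → Fin n → ℂ)
    (r : Fin n → (Fin n → ℂ[X])) : Prop :=
  ∀ j : Fin n, r j ∈ Sol n N z α ∧ r j ∉ prevSet n r j ∧
    ∀ q ∈ Sol n N z α, q ∉ prevSet n r j → height n (r j) ≤ height n q

/-!
Every nonzero vector polynomial has a unique *leading index*, the entry at which its height is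
attained: `n * deg P_j + j - 1` determines `j` modulo `n`. If two solutions share a leading index
and the first is not higher, subtracting a monomial multiple of it from the second lowers the
height. Minimality then forces the generators to have pairwise distinct, hence all, leading
indices. A solution `p` outside `M(r_1) + ⋯ + M(r_n)` shares its leading index with some `r_j`,
and since `p` lies outside `M(r_1) + ⋯ + M(r_{j-1})`, `h(r_j) ≤ h(p)`; reducing `p` by `r_j`
gives a solution of smaller height, still outside the sum, and induction on the height concludes.
-/

open Submodule

variable {n : ℕ}

def entryHeight (n : ℕ) (p : Fin n → ℂ[X]) (j : Fin n) : WithBot ℕ :=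
  (p j).degree.map (n * · + j)

/-- The height `h` with values in `WithBot ℕ`, where `<` is well founded. -/
def natHeight (n : ℕ) (p : Fin n → ℂ[X]) : WithBot ℕ :=
  Finset.univ.sup (entryHeight n p)

def IsLeadingIndex (n : ℕ) (p : Fin n → ℂ[X]) (k : Fin n) : Prop :=
  p k ≠ 0 ∧ natHeight n p = entryHeight n p k

lemma strictMono_mul_add (j : Fin n) : StrictMono fun d : ℕ => n * d + j :=
  (strictMono_mul_left_of_pos j.pos).add_const _

section entryHeight

variable {p q : Fin n → ℂ[X]} {j k : Fin n}

@[simp]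
lemma entryHeight_eq_bot : entryHeight n p j = ⊥ ↔ p j = 0 := by
  simp [entryHeight]

lemma entryHeight_of_ne_zero (hp : p j ≠ 0) :
    entryHeight n p j = ↑(n * (p j).natDegree + j) := by
  rw [entryHeight, degree_eq_natDegree hp]
  rfl

lemma entryHeight_le_entryHeight_iff :
    entryHeight n p j ≤ entryHeight n q j ↔ (p j).degree ≤ (q j).degree :=
  WithBot.map_le_iff _ (strictMono_mul_add j).le_iff_le

lemma entryHeight_sub_le :
    entryHeight n (p - q) j ≤ max (entryHeight n p j) (entryHeight n q j) := by
  have hmono := (strictMono_mul_add j).monotone.withBot_map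
  rw [entryHeight, entryHeight, entryHeight, ← hmono.map_max]
  exact hmono (degree_sub_le _ _)

lemma entryHeight_sub_lt (hp : p j ≠ 0) (hdeg : (q j).degree = (p j).degree)
    (hlc : (q j).leadingCoeff = (p j).leadingCoeff) :
    entryHeight n (p - q) j < entryHeight n p j :=
  (strictMono_mul_add j).withBot_map (degree_sub_lt_left hdeg.symm hp hlc.symm)

lemma entryHeight_smul {S : ℂ[X]} (hS : S ≠ 0) (q : Fin n → ℂ[X]) (j : Fin n) :
    entryHeight n (S • q) j = entryHeight n q j + ↑(n * S.natDegree) := by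
  simp only [entryHeight, Pi.smul_apply, smul_eq_mul, degree_mul, degree_eq_natDegree hS]
  cases (q j).degree
  · rfl
  · show ((n * (S.natDegree + _) + j : ℕ) : WithBot ℕ) =
      ((n * _ + j + n * S.natDegree : ℕ) : WithBot ℕ)
    congr 1
    ring

/-- Entry heights at different indices differ modulo `n`. -/
lemma entryHeight_ne_of_ne (hp : p k ≠ 0) (hjk : j ≠ k) :
    entryHeight n q j ≠ entryHeight n p k := by
  by_cases hq : q j = 0
  · rw [entryHeight_eq_bot.mpr hq]
    exact Ne.symm (entryHeight_eq_bot.not.mpr hp)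
  rw [entryHeight_of_ne_zero hp, entryHeight_of_ne_zero hq, ne_eq, Nat.cast_inj]
  intro h
  apply hjk
  have := congrArg (· % n) h
  simp only [Nat.mul_add_mod, Nat.mod_eq_of_lt j.isLt, Nat.mod_eq_of_lt k.isLt] at this
  exact Fin.ext this

end entryHeight

lemma height_eq_map_natHeight (p : Fin n → ℂ[X]) :
    height n p = (natHeight n p).map ((↑) : ℕ → ℤ) := by
  rw [natHeight, Finset.apply_sup_eq_sup_comp_of_linearOrder (WithBot.map ((↑) : ℕ → ℤ))
    Nat.mono_cast.withBot_map rfl]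
  refine Finset.sup_congr rfl fun j _ => ?_
  by_cases hj : p j = 0
  · simp [entryHeight, hj]
  · rw [Function.comp_apply, if_neg hj, entryHeight_of_ne_zero hj]
    rfl

lemma height_le_height_iff {p q : Fin n → ℂ[X]} :
    height n p ≤ height n q ↔ natHeight n p ≤ natHeight n q := by
  rw [height_eq_map_natHeight, height_eq_map_natHeight]
  exact WithBot.map_le_iff _ Nat.cast_le

section natHeight

variable {p q : Fin n → ℂ[X]} {j k : Fin n}

lemma entryHeight_le_natHeight (p : Fin n → ℂ[X]) (j : Fin n) :
    entryHeight n p j ≤ natHeight n p :=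
  Finset.le_sup (Finset.mem_univ j)

lemma exists_isLeadingIndex (hp : p ≠ 0) : ∃ k, IsLeadingIndex n p k := by
  obtain ⟨j, hj⟩ := Function.ne_iff.mp hp
  obtain ⟨k, -, hk⟩ :=
    Finset.exists_mem_eq_sup Finset.univ ⟨j, Finset.mem_univ j⟩ (entryHeight n p)
  refine ⟨k, fun hk0 => hj ?_, hk⟩
  have := entryHeight_le_natHeight p j
  rwa [natHeight, hk, entryHeight_eq_bot.mpr hk0, le_bot_iff, entryHeight_eq_bot] at this

lemma IsLeadingIndex.entryHeight_lt (hk : IsLeadingIndex n p k)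
    (hq : natHeight n q ≤ natHeight n p) (hjk : j ≠ k) : entryHeight n q j < natHeight n p := by
  rw [hk.2] at hq ⊢
  exact ((entryHeight_le_natHeight q j).trans hq).lt_of_ne (entryHeight_ne_of_ne hk.1 hjk)

lemma IsLeadingIndex.natHeight_sub_lt (hk : IsLeadingIndex n p k)
    (hq : natHeight n q ≤ natHeight n p) (hdeg : (q k).degree = (p k).degree)
    (hlc : (q k).leadingCoeff = (p k).leadingCoeff) :
    natHeight n (p - q) < natHeight n p := by
  have hbot : ⊥ < natHeight n p := by
    rw [hk.2, bot_lt_iff_ne_bot]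
    exact entryHeight_eq_bot.not.mpr hk.1
  refine (Finset.sup_lt_iff hbot).mpr fun j _ => ?_
  rcases eq_or_ne j k with rfl | hjk
  · exact hk.2 ▸ entryHeight_sub_lt hk.1 hdeg hlc
  · exact entryHeight_sub_le.trans_lt
      (max_lt (hk.entryHeight_lt le_rfl hjk) (hk.entryHeight_lt hq hjk))

lemma natHeight_smul_le {S : ℂ[X]} (hS : S ≠ 0) (q : Fin n → ℂ[X]) :
    natHeight n (S • q) ≤ natHeight n q + ↑(n * S.natDegree) :=
  Finset.sup_le fun j _ =>
    (entryHeight_smul hS q j).trans_le (add_le_add_left (entryHeight_le_natHeight q j) _)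

lemma IsLeadingIndex.exists_natHeight_sub_smul_lt (hp : IsLeadingIndex n p k)
    (hq : IsLeadingIndex n q k) (hle : natHeight n q ≤ natHeight n p) :
    ∃ S : ℂ[X], natHeight n (p - S • q) < natHeight n p := by
  have hdeg : (q k).natDegree ≤ (p k).natDegree := by
    rw [hp.2, hq.2, entryHeight_le_entryHeight_iff] at hle
    exact natDegree_le_natDegree hle
  set c := (p k).leadingCoeff / (q k).leadingCoeff
  have hc : c ≠ 0 := div_ne_zero (leadingCoeff_ne_zero.mpr hp.1) (leadingCoeff_ne_zero.mpr hq.1)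
  set S := C c * X ^ ((p k).natDegree - (q k).natDegree)
  have hS : S ≠ 0 := by simp [S, hc]
  have hSq : (S • q) k = S * q k := rfl
  have hdegSq : ((S • q) k).degree = (p k).degree := by
    rw [hSq, degree_mul, degree_eq_natDegree hS, degree_eq_natDegree hq.1,
      degree_eq_natDegree hp.1, natDegree_C_mul_X_pow _ _ hc]
    norm_cast
    omega
  have hlcSq : ((S • q) k).leadingCoeff = (p k).leadingCoeff := by
    rw [hSq, leadingCoeff_mul, leadingCoeff_C_mul_X_pow,
      div_mul_cancel₀ _ (leadingCoeff_ne_zero.mpr hq.1)]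
  refine ⟨S, hp.natHeight_sub_lt ?_ hdegSq hlcSq⟩
  calc natHeight n (S • q) ≤ natHeight n q + ↑(n * S.natDegree) := natHeight_smul_le hS q
    _ = entryHeight n (S • q) k := by rw [hq.2, entryHeight_smul hS]
    _ = natHeight n p := by rw [hp.2, entryHeight, entryHeight, hdegSq]

end natHeight

def solSubmodule (n N : ℕ) (z : Fin N → ℂ) (α : Fin N → Fin n → ℂ) :
    Submodule ℂ[X] (Fin n → ℂ[X]) where
  carrier := Sol n N z α
  zero_mem' j := by simp
  add_mem' {p q} hp hq j := by
    simp only [Pi.add_apply, eval_add, mul_add, Finset.sum_add_distrib, hp j, hq j, add_zero]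
  smul_mem' S p hp j := by
    simp only [Pi.smul_apply, smul_eq_mul, eval_mul, mul_left_comm _ (S.eval (z j)),
      ← Finset.mul_sum, hp j, mul_zero]

lemma Msum_eq_span {m : ℕ} (r : Fin m → Fin n → ℂ[X]) :
    Msum n m r = span ℂ[X] (Set.range r) := by
  ext q
  simp [Msum, mem_span_range_iff_exists_fun, eq_comm]

lemma prevSet_eq_span (r : Fin n → Fin n → ℂ[X]) (j : Fin n) :
    prevSet n r j = span ℂ[X] (r '' Set.Iio j) := by
  ext q
  constructor
  · rintro ⟨S, rfl⟩
    exact sum_smul_mem _ _ fun l hl => subset_span ⟨l, (Finset.mem_filter.mp hl).2, rfl⟩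
  · intro hq
    obtain ⟨l, hl, rfl⟩ := (Finsupp.mem_span_image_iff_linearCombination _).1 hq
    refine ⟨l, ?_⟩
    rw [Finsupp.linearCombination_apply,
      Finsupp.sum_of_support_subset l ?_ (fun i a => a • r i) fun _ _ => zero_smul _ _]
    intro i hi
    simpa using hl hi

namespace IsGenerators

variable {N : ℕ} {z : Fin N → ℂ} {α : Fin N → Fin n → ℂ} {r : Fin n → Fin n → ℂ[X]}

lemma ne_zero (hr : IsGenerators n N z α r) (j : Fin n) : r j ≠ 0 := by
  intro h
  apply (hr j).2.1
  rw [h, prevSet_eq_span]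
  exact zero_mem _

lemma natHeight_mono (hr : IsGenerators n N z α r) : Monotone fun j => natHeight n (r j) := by
  intro i j hij
  refine height_le_height_iff.mp ((hr i).2.2 _ (hr j).1 fun h => (hr j).2.1 ?_)
  rw [prevSet_eq_span] at h ⊢
  exact span_mono (Set.image_mono (Set.Iio_subset_Iio hij)) h

/-- If `r i` and `r j` with `i < j` had the same leading index, reducing `r j` by `r i` would
give a solution outside `M(r_1) + ⋯ + M(r_{j-1})` of smaller height than `r j`. -/
lemma eq_of_isLeadingIndex (hr : IsGenerators n N z α r) {i j k : Fin n}
    (hi : IsLeadingIndex n (r i) k) (hj : IsLeadingIndex n (r j) k) : i = j := by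
  wlog hij : i < j generalizing i j
  · rcases (not_lt.mp hij).eq_or_lt with h | h
    · exact h.symm
    · exact (this hj hi h).symm
  obtain ⟨S, hS⟩ := hj.exists_natHeight_sub_smul_lt hi (hr.natHeight_mono hij.le)
  by_cases hprev : r j - S • r i ∈ prevSet n r j
  · refine absurd ?_ (hr j).2.1
    rw [prevSet_eq_span] at hprev ⊢
    simpa using add_mem hprev (smul_mem _ S (subset_span ⟨i, hij, rfl⟩))
  · have hsol : r j - S • r i ∈ solSubmodule n N z α :=
      sub_mem (hr j).1 (smul_mem _ S (hr i).1)
    exact absurd (height_le_height_iff.mp ((hr j).2.2 _ hsol hprev)) hS.not_ge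

lemma exists_generator_isLeadingIndex (hr : IsGenerators n N z α r) (k : Fin n) :
    ∃ j, IsLeadingIndex n (r j) k := by
  choose K hK using fun j => _root_.exists_isLeadingIndex (hr.ne_zero j)
  have hK_inj : Function.Injective K := fun i j h => hr.eq_of_isLeadingIndex (hK i) (h ▸ hK j)
  obtain ⟨j, rfl⟩ := Finite.surjective_of_injective hK_inj k
  exact ⟨j, hK j⟩

lemma mem_span_of_mem_solSubmodule (hr : IsGenerators n N z α r) {p : Fin n → ℂ[X]}
    (hp : p ∈ solSubmodule n N z α) : p ∈ span ℂ[X] (Set.range r) := by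
  induction hh : natHeight n p using WellFoundedLT.induction generalizing p with
  | _ m ih =>
  by_contra hpM
  have hp0 : p ≠ 0 := by
    rintro rfl
    exact hpM (zero_mem _)
  obtain ⟨k, hk⟩ := exists_isLeadingIndex hp0
  obtain ⟨j, hj⟩ := hr.exists_generator_isLeadingIndex k
  have hle : natHeight n (r j) ≤ natHeight n p := by
    refine height_le_height_iff.mp ((hr j).2.2 p hp fun h => hpM ?_)
    rw [prevSet_eq_span] at h
    exact span_mono (Set.image_subset_range _ _) h
  obtain ⟨S, hS⟩ := hk.exists_natHeight_sub_smul_lt hj hle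
  have hred := ih _ (hh ▸ hS) (sub_mem hp (smul_mem _ S (hr j).1)) rfl
  exact hpM (by simpa using add_mem hred (smul_mem _ S (subset_span ⟨j, rfl⟩)))

lemma solSubmodule_eq_span (hr : IsGenerators n N z α r) :
    solSubmodule n N z α = span ℂ[X] (Set.range r) :=
  le_antisymm (fun _ => hr.mem_span_of_mem_solSubmodule)
    (span_le.mpr (Set.range_subset_iff.mpr fun j => (hr j).1))

end IsGenerators

theorem stmt_19_general (n N : ℕ)
    (z : Fin N → ℂ) (α : Fin N → Fin n → ℂ)
    (r : Fin n → (Fin n → ℂ[X])) (hr : IsGenerators n N z α r) :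
    Sol n N z α = Msum n n r := by
  rw [Msum_eq_span, ← hr.solSubmodule_eq_span]
  rfl

/-- For `n ≥ 2` and generators `r_1, ..., r_n` of `S`, every solution `p ∈ S`
can be written as `p = ∑_(j=1)^n S_j • r_j` with scalar polynomials `S_j`;
that is, `S = M(r_1) + M(r_2) + ... + M(r_n)`. -/
theorem stmt_19 (n N : ℕ) (hn : 2 ≤ n) (hN : 1 ≤ N)
    (z : Fin N → ℂ) (α : Fin N → Fin n → ℂ)
    (hα : ∀ j : Fin N, 0 < ∑ k : Fin n, ‖α j k‖)
    (r : Fin n → (Fin n → ℂ[X])) (hr : IsGenerators n N z α r) :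
    Sol n N z α = Msum n n r :=
  stmt_19_general n N z α r hr
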